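/- Every point of I₀ × 3𝕋 is a peak point for O(cl D): for every a ∈ I₀ = (1/2, 1) and every b ∈ ℂ with |b| = 3 there exists a function g holomorphic on an open neighborhood of cl D such that g(a, b) = 1 and |g(z, w)| < 1 for all (z, w) ∈ cl D \ {(a, b)}. -/

import Mathlib

open Set Complex

noncomputable section

/-- The bounded Hartogs domain `D ⊂ ℂ²` from the paper. -/
def domD : Set (ℂ × ℂ) :=
  {p | ∃ r φ : ℝ, 1 / 2 < r ∧ r < 1 ∧ 0 < φ ∧ φ < 2 * Real.pi ∧
    p.1 = (r : ℂ) * Complex.exp (φ * Complex.I) ∧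
    (φ ≤ Real.pi / 2 → ‖p.2‖ < 1) ∧
    (Real.pi / 2 < φ → φ < 3 * Real.pi / 2 → ‖p.2‖ < 3) ∧
    (3 * Real.pi / 2 ≤ φ → 2 < ‖p.2‖ ∧ ‖p.2‖ < 3)}

/-- `K` is norming for the family `F` of functions on `closure S`. -/
def IsNorming {E : Type*} [TopologicalSpace E] (S K : Set E) (F : Set (E → ℂ)) : Prop :=
  ∀ f ∈ F, sSup ((fun p => ‖f p‖) '' K) =
    sSup ((fun p => ‖f p‖) '' closure S)

/-- `O(cl S)`: functions extending holomorphically to an open neighborhood of `closure S`. -/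
def Ocl {E : Type*} [NormedAddCommGroup E] [NormedSpace ℂ E] (S : Set E) :
    Set (E → ℂ) :=
  {f | ∃ U : Set E, IsOpen U ∧ closure S ⊆ U ∧ DifferentiableOn ℂ f U}

/-- `A(S)`: functions continuous on `closure S` and holomorphic on `S`. -/
def Acl {E : Type*} [NormedAddCommGroup E] [NormedSpace ℂ E] (S : Set E) :
    Set (E → ℂ) :=
  {f | ContinuousOn f (closure S) ∧ DifferentiableOn ℂ f S}

/-- `K` is the minimal compact norming set for the family `F` on `closure S`
(i.e. the Shilov-type boundary associated with `F`). -/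
def IsShilovFor {E : Type*} [NormedAddCommGroup E] [NormedSpace ℂ E]
    (S : Set E) (F : Set (E → ℂ)) (K : Set E) : Prop :=
  IsCompact K ∧ K ⊆ closure S ∧ IsNorming S K F ∧
    ∀ K' : Set E, IsCompact K' → K' ⊆ closure S → IsNorming S K' F → K ⊆ K'

/-!
In the coordinates `ζ = log z - log a - 2πi`, with the branch of `log z` that continues the
argument of `z` from `0` to `2π` when going around the sheet `2 < |w| < 3` of `D`, the closure of
`D` lies in the strip `-2π ≤ Im ζ ≤ 0`. There `exp (-7iζ - ζ²)` has modulus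
`exp (Im ζ (7 + Im ζ) - (Re ζ)²) ≤ 1` (as `7 > 2π`), with equality only at `ζ = 0`, that is at
`z = a` on the upper sheet. Multiplying by `w / b` and averaging with `1` gives the peak function
`g = (1 + (w / b) exp (-7iζ - ζ²)) / 2`.
-/

open Real

lemma Complex.log_neg_add_pi_mul_I_of_im_pos {z : ℂ} (h : 0 < z.im) :
    log (-z) + π * I = log z := by
  apply Complex.ext <;> simp [log_re, log_im, arg_neg_eq_arg_sub_pi_of_im_pos h]

lemma Complex.log_neg_add_pi_mul_I_of_im_neg {z : ℂ} (h : z.im < 0) :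
    log (-z) + π * I = log z + 2 * π * I := by
  apply Complex.ext <;> simp [log_re, log_im, arg_neg_eq_arg_add_pi_of_im_neg h]
  ring

lemma re_neg_mul_I_sub_sq (k : ℝ) (ζ : ℂ) :
    (-(k * I * ζ) - ζ ^ 2).re = ζ.im * (k + ζ.im) - ζ.re ^ 2 := by
  simp only [sub_re, neg_re, mul_re, pow_two, ofReal_re, ofReal_im, I_re, I_im, mul_im]
  ring

lemma norm_exp_neg_mul_I_sub_sq_le_one {k : ℝ} {ζ : ℂ} (h₀ : -k ≤ ζ.im) (h₁ : ζ.im ≤ 0) :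
    ‖exp (-(k * I * ζ) - ζ ^ 2)‖ ≤ 1 := by
  rw [norm_exp, Real.exp_le_one_iff, re_neg_mul_I_sub_sq]
  nlinarith [sq_nonneg ζ.re]

lemma eq_zero_of_norm_exp_neg_mul_I_sub_sq_eq_one {k : ℝ} {ζ : ℂ} (h₀ : -k < ζ.im)
    (h₁ : ζ.im ≤ 0) (h : ‖exp (-(k * I * ζ) - ζ ^ 2)‖ = 1) : ζ = 0 := by
  rw [norm_exp, Real.exp_eq_one_iff, re_neg_mul_I_sub_sq] at h
  have him : ζ.im = 0 := by nlinarith [sq_nonneg ζ.re]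
  have hre : ζ.re = 0 := by rw [him] at h; nlinarith [sq_nonneg ζ.re]
  exact Complex.ext hre him

/-- A branch of `log z` near `cl D`: on the sheet `|w| > 3/2` its argument is continued across
the positive real axis to values in `(π, 2π]`. -/
def domDLog (p : ℂ × ℂ) : ℂ :=
  if p.1.re < |p.1.im| then log (-p.1) + π * I
  else if 3 / 2 < ‖p.2‖ then log p.1 + 2 * π * I
  else log p.1

def domDNbhdLeft : Set (ℂ × ℂ) := {p | p.1.re < |p.1.im|}

def domDNbhdLower : Set (ℂ × ℂ) := {p | 0 < p.1.re ∧ -(p.1.re / 2) < p.1.im ∧ ‖p.2‖ < 3 / 2}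

def domDNbhdUpper : Set (ℂ × ℂ) := {p | 0 < p.1.re ∧ p.1.im < p.1.re / 2 ∧ 3 / 2 < ‖p.2‖}

def domDNbhd : Set (ℂ × ℂ) := domDNbhdLeft ∪ domDNbhdLower ∪ domDNbhdUpper

def domDEnvelope : Set (ℂ × ℂ) :=
  {p | 1 / 2 ≤ ‖p.1‖ ∧
    ((0 ≤ p.1.re ∧ 0 ≤ p.1.im ∧ ‖p.2‖ ≤ 1) ∨ (p.1.re ≤ 0 ∧ ‖p.2‖ ≤ 3) ∨
      (0 ≤ p.1.re ∧ p.1.im ≤ 0 ∧ 2 ≤ ‖p.2‖ ∧ ‖p.2‖ ≤ 3))}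

lemma isOpen_domDNbhdLeft : IsOpen domDNbhdLeft := isOpen_lt (by fun_prop) (by fun_prop)

lemma isOpen_domDNbhdLower : IsOpen domDNbhdLower := by
  simp only [domDNbhdLower, ofPred_and]
  apply_rules [IsOpen.inter, isOpen_lt] <;> fun_prop

lemma isOpen_domDNbhdUpper : IsOpen domDNbhdUpper := by
  simp only [domDNbhdUpper, ofPred_and]
  apply_rules [IsOpen.inter, isOpen_lt] <;> fun_prop

lemma isOpen_domDNbhd : IsOpen domDNbhd :=
  (isOpen_domDNbhdLeft.union isOpen_domDNbhdLower).union isOpen_domDNbhdUpper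

lemma isClosed_domDEnvelope : IsClosed domDEnvelope := by
  simp only [domDEnvelope, ofPred_and, ofPred_or]
  apply_rules [IsClosed.inter, IsClosed.union, isClosed_le] <;> fun_prop

lemma differentiableOn_domDLog_left : DifferentiableOn ℂ domDLog domDNbhdLeft := by
  refine DifferentiableOn.congr ?_ fun p hp => if_pos hp
  refine (DifferentiableOn.clog (by fun_prop)
    fun (p : ℂ × ℂ) (hp : p.1.re < |p.1.im|) => ?_).add_const _
  rw [mem_slitPlane_iff, neg_re, neg_im, neg_ne_zero]
  by_cases him : p.1.im = 0
  · rw [him, abs_zero] at hp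
    exact Or.inl (neg_pos.2 hp)
  · exact Or.inr him

lemma differentiableOn_domDLog_lower : DifferentiableOn ℂ domDLog domDNbhdLower := by
  refine DifferentiableOn.congr (DifferentiableOn.clog (by fun_prop) fun p hp => Or.inl hp.1) ?_
  rintro p ⟨hre, him, hw⟩
  unfold domDLog
  rw [if_neg hw.not_gt]
  split_ifs with hcone
  · exact log_neg_add_pi_mul_I_of_im_pos (by cases abs_cases p.1.im <;> linarith)
  · rfl

lemma differentiableOn_domDLog_upper : DifferentiableOn ℂ domDLog domDNbhdUpper := by
  refine DifferentiableOn.congr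
    ((DifferentiableOn.clog (by fun_prop) fun p hp => Or.inl hp.1).add_const (2 * π * I)) ?_
  rintro p ⟨hre, him, hw⟩
  unfold domDLog
  rw [if_pos hw]
  split_ifs with hcone
  · exact log_neg_add_pi_mul_I_of_im_neg (by cases abs_cases p.1.im <;> linarith)
  · rfl

lemma differentiableOn_domDLog : DifferentiableOn ℂ domDLog domDNbhd :=
  (differentiableOn_domDLog_left.union_of_isOpen differentiableOn_domDLog_lower
    isOpen_domDNbhdLeft isOpen_domDNbhdLower).union_of_isOpen differentiableOn_domDLog_upper
    (isOpen_domDNbhdLeft.union isOpen_domDNbhdLower) isOpen_domDNbhdUpper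

lemma exp_domDLog {p : ℂ × ℂ} (h : p.1 ≠ 0) : exp (domDLog p) = p.1 := by
  unfold domDLog
  split_ifs
  · rw [Complex.exp_add, exp_log (neg_ne_zero.2 h), exp_pi_mul_I, neg_mul_neg, mul_one]
  · rw [Complex.exp_add, exp_log h, exp_two_pi_mul_I, mul_one]
  · exact exp_log h

lemma domD_subset_domDEnvelope : domD ⊆ domDEnvelope := by
  rintro p ⟨r, φ, hr₀, hr₁, hφ₀, hφ₁, hz, hfirst, hsecond, hfourth⟩
  have hπ := Real.pi_pos
  have hnorm : ‖p.1‖ = r := by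
    rw [hz, norm_mul, norm_real, Real.norm_of_nonneg (by linarith), norm_exp_ofReal_mul_I,
      mul_one]
  have hre : p.1.re = r * Real.cos φ := by
    simp [hz, mul_re, exp_ofReal_mul_I_re, exp_ofReal_mul_I_im]
  have him : p.1.im = r * Real.sin φ := by
    simp [hz, mul_im, exp_ofReal_mul_I_re, exp_ofReal_mul_I_im]
  refine ⟨by linarith, ?_⟩
  rw [hre, him]
  rcases le_or_gt φ (π / 2) with h₁ | h₁
  · have hcos : 0 ≤ Real.cos φ := Real.cos_nonneg_of_mem_Icc ⟨by linarith, h₁⟩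
    have hsin : 0 ≤ Real.sin φ := Real.sin_nonneg_of_nonneg_of_le_pi hφ₀.le (by linarith)
    exact Or.inl ⟨by positivity, by positivity, (hfirst h₁).le⟩
  rcases lt_or_ge φ (3 * π / 2) with h₂ | h₂
  · have hcos : Real.cos φ ≤ 0 := Real.cos_nonpos_of_pi_div_two_le_of_le h₁.le (by linarith)
    exact Or.inr (Or.inl ⟨by nlinarith, (hsecond h₁ h₂).le⟩)
  · have hcos : 0 ≤ Real.cos φ := by
      rw [← Real.cos_sub_two_pi]
      exact Real.cos_nonneg_of_mem_Icc ⟨by linarith, by linarith⟩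
    have hsin : Real.sin φ ≤ 0 := by
      rw [← Real.sin_sub_two_pi]
      exact Real.sin_nonpos_of_nonpos_of_neg_pi_le (by linarith) (by linarith)
    exact Or.inr (Or.inr ⟨by positivity, by nlinarith, (hfourth h₂).1.le, (hfourth h₂).2.le⟩)

lemma domDEnvelope_subset_domDNbhd : domDEnvelope ⊆ domDNbhd := by
  rintro p ⟨hnorm, hcase⟩
  by_cases hcone : p.1.re < |p.1.im|
  · exact Or.inl (Or.inl hcone)
  push Not at hcone
  have hre : 0 < p.1.re := by
    refine lt_of_le_of_ne ((abs_nonneg _).trans hcone) fun h => ?_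
    have : ‖p.1‖ ≤ |p.1.re| + |p.1.im| := norm_le_abs_re_add_abs_im p.1
    rw [← h, abs_zero] at this
    rw [← h] at hcone
    linarith [abs_nonneg p.1.im]
  rcases hcase with ⟨-, him, hw⟩ | ⟨hre', -⟩ | ⟨-, him, hw, -⟩
  · exact Or.inl (Or.inr ⟨hre, by linarith, by linarith⟩)
  · linarith
  · exact Or.inr ⟨hre, by linarith, by linarith⟩

lemma closure_domD_subset_domDEnvelope : closure domD ⊆ domDEnvelope :=
  closure_minimal domD_subset_domDEnvelope isClosed_domDEnvelope

lemma im_domDLog_mem_Icc {p : ℂ × ℂ} (hp : p ∈ domDEnvelope) :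
    (domDLog p).im ∈ Icc 0 (2 * π) := by
  obtain ⟨-, hcase⟩ := hp
  have hπ := Real.pi_pos
  unfold domDLog
  split_ifs with hcone hw
  · have : (log (-p.1) + π * I).im = arg (-p.1) + π := by simp [log_im]
    rw [this, mem_Icc]
    constructor <;> linarith [neg_pi_lt_arg (-p.1), arg_le_pi (-p.1)]
  · have him : p.1.im ≤ 0 := by
      rcases hcase with ⟨-, -, hw'⟩ | ⟨hre, -⟩ | ⟨-, him, -⟩
      · linarith
      · linarith [le_abs_self p.1.im, not_lt.1 hcone]
      · exact him
    have harg : arg p.1 ≤ 0 := by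
      rcases him.lt_or_eq with him | him
      · exact (arg_neg_iff.2 him).le
      · exact (arg_eq_zero_iff.2 ⟨(abs_nonneg _).trans (not_lt.1 hcone), him⟩).le
    have : (log p.1 + 2 * π * I).im = arg p.1 + 2 * π := by simp [log_im]
    rw [this, mem_Icc]
    constructor <;> linarith [neg_pi_lt_arg p.1]
  · have him : 0 ≤ p.1.im := by
      rcases hcase with ⟨-, him, -⟩ | ⟨hre, -⟩ | ⟨-, -, hw', -⟩
      · exact him
      · linarith [neg_abs_le p.1.im, not_lt.1 hcone]
      · linarith
    rw [log_im]
    exact ⟨arg_nonneg_iff.2 him, (arg_le_pi p.1).trans (by linarith)⟩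

lemma norm_snd_le_of_mem_domDEnvelope {p : ℂ × ℂ} (hp : p ∈ domDEnvelope) : ‖p.2‖ ≤ 3 := by
  rcases hp.2 with ⟨-, -, h⟩ | ⟨-, h⟩ | ⟨-, -, -, h⟩ <;> linarith

lemma norm_one_add_div_two_lt_one {f : ℂ} (h : ‖f‖ ≤ 1) (hf : f ≠ 1) : ‖(1 + f) / 2‖ < 1 := by
  have hmid : (1 + f) / 2 = (1 / 2 : ℝ) • (1 : ℂ) + (1 / 2 : ℝ) • f := by
    simp only [real_smul]; push_cast; ring
  rw [hmid]
  exact norm_combo_lt_of_ne norm_one.le h hf.symm (by norm_num) (by norm_num) (by norm_num)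

def domDCoord (a : ℝ) (p : ℂ × ℂ) : ℂ := domDLog p - (Real.log a + 2 * π * I)

def domDPeakFun (a : ℝ) (b : ℂ) (p : ℂ × ℂ) : ℂ :=
  (1 + p.2 / b * exp (-((7 : ℝ) * I * domDCoord a p) - domDCoord a p ^ 2)) / 2

lemma differentiableOn_domDPeakFun (a : ℝ) (b : ℂ) :
    DifferentiableOn ℂ (domDPeakFun a b) domDNbhd := by
  have := differentiableOn_domDLog
  unfold domDPeakFun domDCoord
  fun_prop

lemma domDPeakFun_self {a : ℝ} {b : ℂ} (ha : 0 < a) (hb : 3 / 2 < ‖b‖) :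
    domDPeakFun a b ((a : ℂ), b) = 1 := by
  have hb₀ : b ≠ 0 := norm_pos_iff.1 (by linarith)
  have hlog : domDLog (a, b) = Real.log a + 2 * π * I := by
    rw [domDLog, if_neg (by simp [ha.le]), if_pos hb, ofReal_log ha.le]
  simp [domDPeakFun, domDCoord, hlog, hb₀]

lemma norm_domDPeakFun_lt_one {a : ℝ} {b : ℂ} (ha : 0 < a) (hb : ‖b‖ = 3) {p : ℂ × ℂ}
    (hp : p ∈ domDEnvelope) (hne : p ≠ ((a : ℂ), b)) : ‖domDPeakFun a b p‖ < 1 := by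
  have hb₀ : b ≠ 0 := norm_pos_iff.1 (by linarith)
  set ζ := domDCoord a p with hζ
  have him : ζ.im ∈ Icc (-(2 * π)) 0 := by
    obtain ⟨h₀, h₁⟩ := im_domDLog_mem_Icc hp
    have : ζ.im = (domDLog p).im - 2 * π := by simp [hζ, domDCoord]
    exact ⟨by linarith, by linarith⟩
  have h7 : -(7 : ℝ) < ζ.im := by linarith [him.1, Real.pi_lt_d2]
  set u := p.2 / b
  set E := exp (-((7 : ℝ) * I * ζ) - ζ ^ 2) with hE_def
  have hu : ‖u‖ ≤ 1 := by
    rw [norm_div, hb, div_le_one (by norm_num)]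
    exact norm_snd_le_of_mem_domDEnvelope hp
  have hE : ‖E‖ ≤ 1 := norm_exp_neg_mul_I_sub_sq_le_one h7.le him.2
  refine norm_one_add_div_two_lt_one
    ((norm_mul u E).trans_le (mul_le_one₀ hu (norm_nonneg _) hE)) fun (h : u * E = 1) => hne ?_
  have hE₁ : ‖E‖ = 1 := le_antisymm hE <| calc
    1 = ‖u * E‖ := by rw [h, norm_one]
    _ = ‖u‖ * ‖E‖ := norm_mul u E
    _ ≤ ‖E‖ := mul_le_of_le_one_left (norm_nonneg E) hu
  have hζ₀ : ζ = 0 := eq_zero_of_norm_exp_neg_mul_I_sub_sq_eq_one h7 him.2 hE₁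
  have hz : p.1 = a := by
    have hp₁ : p.1 ≠ 0 := norm_pos_iff.1 (by linarith [hp.1])
    have hlog : domDLog p = Real.log a + 2 * π * I := sub_eq_zero.1 hζ₀
    rw [← exp_domDLog hp₁, hlog, Complex.exp_add, exp_two_pi_mul_I, mul_one, ← ofReal_exp,
      Real.exp_log ha]
  have hw : p.2 = b := by
    have : E = 1 := by rw [hE_def, hζ₀]; simp
    rwa [this, mul_one, div_eq_one_iff_eq hb₀] at h
  exact Prod.ext hz hw

theorem stmt17 (a : ℝ) (ha : a ∈ Ioo (1 / 2 : ℝ) 1) (b : ℂ) (hb : ‖b‖ = 3) :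
    ∃ (g : ℂ × ℂ → ℂ) (U : Set (ℂ × ℂ)), IsOpen U ∧ closure domD ⊆ U ∧
      DifferentiableOn ℂ g U ∧ g ((a : ℂ), b) = 1 ∧
      ∀ p ∈ closure domD, p ≠ ((a : ℂ), b) → ‖g p‖ < 1 := by
  have ha₀ : 0 < a := by linarith [ha.1]
  exact ⟨domDPeakFun a b, domDNbhd, isOpen_domDNbhd,
    closure_domD_subset_domDEnvelope.trans domDEnvelope_subset_domDNbhd,
    differentiableOn_domDPeakFun a b, domDPeakFun_self ha₀ (by rw [hb]; norm_num),
    fun p hp hne => norm_domDPeakFun_lt_one ha₀ hb (closure_domD_subset_domDEnvelope hp) hne⟩
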